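/- arXiv:2002.01496 — 2 statements merged into one kernel-verified Lean document; each statement's English description precedes it below -/
import Mathlib

section
/- Consider a strictly convex quadratic program: minimize $\|x\|^2$ over $x \in \mathbb{R}^n$ subject to $Ax \le b$ (with $A$ fixed and $b$ varying over parameters for which the feasible set is nonempty). Then for each such $b$ the minimizer $x^*(b)$ exists and is unique, and the map $b \mapsto x^*(b)$ is Lipschitz continuous: there is a constant $C > 0$ depending only on $A$ such that $\|x^*(b^{(1)}) - x^*(b^{(2)})\| \le C \|b^{(1)} - b^{(2)}\|$ for all admissible $b^{(1)}, b^{(2)}$. -/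
/-!
The feasible sets `{x | T x ≤ b}` are closed and convex, so the minimum-norm point exists and
is unique. For the Lipschitz bound, let `b` run along the segment from `b₁` to `b₂`. If `S` is
the active set of a minimizer `x`, first-order optimality puts `x` in `(ker T_S)ᗮ` while
`T_S x = b_S`; since `T_S` is injective on `(ker T_S)ᗮ`, two minimizers with the same active set
are `C_S`-close relative to their right-hand sides. Along the segment the minimizer is
continuous (its norm is convex in the parameter, and limits of minimizers are feasible), and
there are finitely many active sets, so it is a continuous function that is Lipschitz on each of
finitely many pieces of `[0, 1]`, hence Lipschitz.
-/

open Set Filter Topology AffineMap RealInnerProductSpace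
open scoped NNReal

section MinNormPoint

variable {E : Type*} [NormedAddCommGroup E]

def IsMinNormPoint (K : Set E) (x : E) : Prop :=
  x ∈ K ∧ IsMinOn (‖·‖) K x

theorem isMinNormPoint_iff_sq {K : Set E} {x : E} :
    IsMinNormPoint K x ↔ x ∈ K ∧ ∀ y ∈ K, ‖x‖ ^ 2 ≤ ‖y‖ ^ 2 := by
  simp only [IsMinNormPoint, isMinOn_iff, sq_le_sq₀ (norm_nonneg _) (norm_nonneg _)]

theorem IsClosed.exists_isMinNormPoint [ProperSpace E] {K : Set E} (hK : IsClosed K)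
    (hne : K.Nonempty) : ∃ x, IsMinNormPoint K x := by
  obtain ⟨x, hx, hdist⟩ := hK.exists_infDist_eq_dist hne 0
  refine ⟨x, hx, fun y hy => ?_⟩
  have := Metric.infDist_le_dist_of_mem (x := 0) hy
  rwa [hdist, dist_zero_left, dist_zero_left] at this

variable [InnerProductSpace ℝ E]

theorem IsMinNormPoint.inner_sub_nonneg {K : Set E} {x y : E} (hK : Convex ℝ K)
    (hx : IsMinNormPoint K x) (hy : y ∈ K) : 0 ≤ ⟪x, y - x⟫ := by
  have : Nonempty K := ⟨⟨x, hx.1⟩⟩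
  have hinf : ‖0 - x‖ = ⨅ w : K, ‖0 - (w : E)‖ := by
    simp only [zero_sub, norm_neg]
    exact le_antisymm (le_ciInf fun w => hx.2 w.2) (ciInf_le (f := fun w : K => ‖(w : E)‖)
      ⟨0, forall_mem_range.2 fun w => norm_nonneg _⟩ ⟨x, hx.1⟩)
  simpa [inner_neg_left] using (norm_eq_iInf_iff_real_inner_le_zero hK hx.1).1 hinf y hy

theorem IsMinNormPoint.unique {K : Set E} {x y : E} (hK : Convex ℝ K)
    (hx : IsMinNormPoint K x) (hy : IsMinNormPoint K y) : x = y := by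
  have hxy := hx.inner_sub_nonneg hK hy.1
  have hyx := hy.inner_sub_nonneg hK hx.1
  have : ‖x - y‖ ^ 2 = -(⟪x, y - x⟫ + ⟪y, x - y⟫) := by
    rw [← real_inner_self_eq_norm_sq]
    simp only [inner_sub_left, inner_sub_right, real_inner_comm x y]
    ring
  rw [← sub_eq_zero, ← norm_eq_zero]
  nlinarith [norm_nonneg (x - y)]

theorem continuousWithinAt_of_isMinNormPoint [ProperSpace E] {X : Type*} [TopologicalSpace X]
    {K : X → Set E} {g : X → E} {s : Set X} {t : X} (hgraph : IsClosed {p : X × E | p.2 ∈ K p.1})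
    (hconv : Convex ℝ (K t)) (hg : ∀ x ∈ s, IsMinNormPoint (K x) (g x)) (ht : t ∈ s)
    (husc : UpperSemicontinuousWithinAt (‖g ·‖) s t) :
    ContinuousWithinAt g s t := by
  have hball : ∀ᶠ x in 𝓝[s] t, g x ∈ Metric.closedBall 0 (‖g t‖ + 1) :=
    (husc _ (lt_add_one _)).mono fun x hx => mem_closedBall_zero_iff.2 hx.le
  refine (isCompact_closedBall _ _).tendsto_nhds_of_unique_mapClusterPt hball fun z _ hz => ?_
  obtain ⟨U, hU, hgz⟩ := mapClusterPt_iff_ultrafilter.1 hz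
  have hxt : Tendsto id (U : Filter X) (𝓝 t) := tendsto_id'.2 (hU.trans nhdsWithin_le_nhds)
  have hzK : z ∈ K t := hgraph.mem_of_tendsto (hxt.prodMk_nhds hgz)
    (hU (eventually_nhdsWithin_of_forall fun x hx => (hg x hx).1))
  have hzle : ‖z‖ ≤ ‖g t‖ := le_of_forall_gt_imp_ge_of_dense fun c hc =>
    le_of_tendsto hgz.norm (hU ((husc c hc).mono fun _ => le_of_lt))
  have hzmin : IsMinNormPoint (K t) z := ⟨hzK, fun y hy => hzle.trans ((hg t ht).2 hy)⟩
  exact hzmin.unique hconv (hg t ht)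

end MinNormPoint

theorem LinearMap.exists_norm_le_mul_norm_of_mem_orthogonal_ker {E F : Type*}
    [NormedAddCommGroup E] [InnerProductSpace ℝ E] [FiniteDimensional ℝ E]
    [NormedAddCommGroup F] [NormedSpace ℝ F] (f : E →ₗ[ℝ] F) :
    ∃ C : ℝ≥0, ∀ x ∈ (LinearMap.ker f)ᗮ, ‖x‖ ≤ C * ‖f x‖ := by
  have hinj : LinearMap.ker (f.domRestrict (LinearMap.ker f)ᗮ) = ⊥ := by
    rw [LinearMap.ker_eq_bot, LinearMap.injective_domRestrict_iff]
    exact (Submodule.orthogonal_disjoint _).symm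
  obtain ⟨C, -, hC⟩ := (f.domRestrict (LinearMap.ker f)ᗮ).exists_antilipschitzWith hinj
  exact ⟨C, fun x hx => hC.le_mul_norm (map_zero _) ⟨x, hx⟩⟩

section Polyhedron

variable {E : Type*} [NormedAddCommGroup E] [InnerProductSpace ℝ E] {κ : Type*}

theorem convex_polyhedron (T : E →ₗ[ℝ] κ → ℝ) (b : κ → ℝ) : Convex ℝ {x | T x ≤ b} :=
  (convex_Iic b).linear_preimage T

theorem isClosed_polyhedron [FiniteDimensional ℝ E] (T : E →ₗ[ℝ] κ → ℝ) (b : κ → ℝ) :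
    IsClosed {x | T x ≤ b} :=
  isClosed_Iic.preimage T.continuous_of_finiteDimensional

theorem map_combo_le_affine_combo {V : Type*} [AddCommGroup V] [Module ℝ V] {T : E →ₗ[ℝ] κ → ℝ}
    {β : V →ᵃ[ℝ] κ → ℝ} {x y : E} {s t : V} {a b : ℝ} (hx : T x ≤ β s) (hy : T y ≤ β t)
    (ha : 0 ≤ a) (hb : 0 ≤ b) (hab : a + b = 1) :
    T (a • x + b • y) ≤ β (a • s + b • t) := by
  rw [Convex.combo_affine_apply hab, map_add, map_smul, map_smul]
  gcongr

def activeSet (T : E →ₗ[ℝ] κ → ℝ) (b : κ → ℝ) (x : E) : Set κ := {i | T x i = b i}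

theorem IsMinNormPoint.inner_eq_zero_of_activeSet [Finite κ] {T : E →ₗ[ℝ] κ → ℝ} {b : κ → ℝ}
    {x k : E} (hx : IsMinNormPoint {x | T x ≤ b} x) (hk : ∀ i ∈ activeSet T b x, T k i = 0) :
    ⟪x, k⟫ = 0 := by
  have hfeas : ∀ᶠ ε in 𝓝 (0 : ℝ), T (x + ε • k) ≤ b := by
    have : ∀ i, ∀ᶠ ε in 𝓝 (0 : ℝ), T x i + ε * T k i ≤ b i := by
      intro i
      rcases (hx.1 i).eq_or_lt with hi | hi
      · exact .of_forall fun ε => by simp [hi, hk i hi]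
      · have : Tendsto (fun ε : ℝ => T x i + ε * T k i) (𝓝 0) (𝓝 (T x i)) :=
          (continuous_const.add (continuous_id.mul continuous_const)).tendsto' _ _ (by simp)
        exact (this.eventually (gt_mem_nhds hi)).mono fun _ => le_of_lt
    filter_upwards [eventually_all.2 this] with ε hε i
    simpa using hε i
  have hlocmin : IsLocalMin (fun ε : ℝ => ‖x + ε • k‖ ^ 2) 0 := by
    filter_upwards [hfeas] with ε hε
    simpa using pow_le_pow_left₀ (norm_nonneg _) (hx.2 hε) 2
  have hderiv : HasDerivAt (fun ε : ℝ => ‖x + ε • k‖ ^ 2) (2 * ⟪x + (0 : ℝ) • k, (1 : ℝ) • k⟫) 0 :=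
    ((hasDerivAt_id' (0 : ℝ)).smul_const k |>.const_add x).norm_sq
  simpa using hlocmin.hasDerivAt_eq_zero hderiv

theorem exists_norm_sub_le_of_activeSet_eq [FiniteDimensional ℝ E] [Fintype κ]
    (T : E →ₗ[ℝ] κ → ℝ) :
    ∃ C : ℝ≥0, ∀ {b₁ b₂ : κ → ℝ} {x₁ x₂ : E}, IsMinNormPoint {x | T x ≤ b₁} x₁ →
      IsMinNormPoint {x | T x ≤ b₂} x₂ → activeSet T b₁ x₁ = activeSet T b₂ x₂ →
      ‖x₁ - x₂‖ ≤ C * ‖b₁ - b₂‖ := by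
  classical
  let restrict (S : Set κ) : E →ₗ[ℝ] S → ℝ := LinearMap.funLeft ℝ ℝ ((↑) : S → κ) ∘ₗ T
  choose CS hCS using fun S => (restrict S).exists_norm_le_mul_norm_of_mem_orthogonal_ker
  obtain ⟨C, hC⟩ := Finite.exists_le CS
  refine ⟨C, fun {b₁ b₂ x₁ x₂} hx₁ hx₂ hS => ?_⟩
  set S := activeSet T b₁ x₁
  have hperp {b : κ → ℝ} {x : E} (hx : IsMinNormPoint {x | T x ≤ b} x)
      (hxS : activeSet T b x = S) : x ∈ (LinearMap.ker (restrict S))ᗮ := by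
    refine (Submodule.mem_orthogonal' _ _).2 fun k hk => ?_
    refine hx.inner_eq_zero_of_activeSet fun i hi => ?_
    rw [hxS] at hi
    exact congrFun (LinearMap.mem_ker.1 hk) ⟨i, hi⟩
  have hrestrict : restrict S (x₁ - x₂) = fun i : S => b₁ i - b₂ i := by
    ext ⟨i, hi⟩
    have hi₂ : i ∈ activeSet T b₂ x₂ := hS ▸ hi
    simp only [restrict, LinearMap.comp_apply, LinearMap.funLeft_apply, map_sub, Pi.sub_apply]
    rw [hi, hi₂]
  calc ‖x₁ - x₂‖ ≤ CS S * ‖restrict S (x₁ - x₂)‖ :=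
        hCS S _ (Submodule.sub_mem _ (hperp hx₁ rfl) (hperp hx₂ hS.symm))
    _ ≤ C * ‖b₁ - b₂‖ := by
        rw [hrestrict]
        gcongr
        · exact hC S
        · exact (pi_norm_le_iff_of_nonneg (norm_nonneg _)).2 fun i => norm_le_pi_norm (b₁ - b₂) i

theorem convexOn_norm_of_isMinNormPoint_affine {V : Type*} [AddCommGroup V] [Module ℝ V]
    {T : E →ₗ[ℝ] κ → ℝ} {β : V →ᵃ[ℝ] κ → ℝ} {D : Set V} (hD : Convex ℝ D) {g : V → E}
    (hg : ∀ t ∈ D, IsMinNormPoint {x | T x ≤ β t} (g t)) :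
    ConvexOn ℝ D (‖g ·‖) := by
  refine ⟨hD, fun s hs t ht a b ha hb hab => ?_⟩
  calc ‖g (a • s + b • t)‖ ≤ ‖a • g s + b • g t‖ :=
        (hg _ (hD hs ht ha hb hab)).2
          (map_combo_le_affine_combo (hg s hs).1 (hg t ht).1 ha hb hab)
    _ ≤ a • ‖g s‖ + b • ‖g t‖ := by
        simpa [norm_smul, abs_of_nonneg ha, abs_of_nonneg hb] using norm_add_le (a • g s) (b • g t)

theorem continuousOn_of_isMinNormPoint_affine [Fintype κ] [FiniteDimensional ℝ E]
    {T : E →ₗ[ℝ] κ → ℝ} {β : ℝ →ᵃ[ℝ] κ → ℝ} {g : ℝ → E}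
    (hg : ∀ t ∈ Icc (0 : ℝ) 1, IsMinNormPoint {x | T x ≤ β t} (g t)) :
    ContinuousOn g (Icc 0 1) := by
  have hconvex := convexOn_norm_of_isMinNormPoint_affine (convex_Icc 0 1) hg
  let chord (s : ℝ) : ℝ := (1 - s) * ‖g 0‖ + s * ‖g 1‖
  have hchord : ∀ s ∈ Icc (0 : ℝ) 1, ‖g s‖ ≤ chord s := fun s hs => by
    simpa using hconvex.2 (left_mem_Icc.2 zero_le_one) (right_mem_Icc.2 zero_le_one)
      (sub_nonneg.2 hs.2) hs.1 (sub_add_cancel 1 s)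
  -- Convexity gives continuity only on the interior; at the endpoints the chord bounds from above.
  have husc_of_chord {t : ℝ} (ht : chord t = ‖g t‖) :
      UpperSemicontinuousWithinAt (‖g ·‖) (Icc 0 1) t := fun c hc => by
    have hcont : ContinuousAt chord t := by fun_prop
    filter_upwards [self_mem_nhdsWithin,
      nhdsWithin_le_nhds (hcont.eventually (gt_mem_nhds (ht.trans_lt hc)))] with s hs hlt
    exact (hchord s hs).trans_lt hlt
  have husc : ∀ t ∈ Icc (0 : ℝ) 1, UpperSemicontinuousWithinAt (‖g ·‖) (Icc 0 1) t := by
    intro t ht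
    rcases eq_endpoints_or_mem_Ioo_of_mem_Icc ht with rfl | rfl | ht'
    · exact husc_of_chord (by simp [chord])
    · exact husc_of_chord (by simp [chord])
    · rw [← interior_Icc] at ht'
      exact ((hconvex.continuousOn_interior t ht').continuousAt
        (isOpen_interior.mem_nhds ht')).continuousWithinAt.upperSemicontinuousWithinAt
  have hgraph : IsClosed {p : ℝ × E | T p.2 ≤ β p.1} :=
    isClosed_le (T.continuous_of_finiteDimensional.comp continuous_snd)
      (β.continuous_of_finiteDimensional.comp continuous_fst)
  exact fun t ht => continuousWithinAt_of_isMinNormPoint hgraph (convex_polyhedron T _) hg ht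
    (husc t ht)

end Polyhedron

section Interval

variable {X : Type*} [PseudoMetricSpace X] {f : ℝ → X} {a b L : ℝ} {ι : Type*} [Finite ι]

theorem eventually_dist_le_of_piecewise_lipschitz (hf : ContinuousOn f (Icc a b)) (σ : ℝ → ι)
    (hσ : ∀ s ∈ Icc a b, ∀ t ∈ Icc a b, σ s = σ t → dist (f s) (f t) ≤ L * dist s t)
    {t : ℝ} (ht : t ∈ Icc a b) :
    ∀ᶠ s in 𝓝[Icc a b] t, dist (f s) (f t) ≤ L * dist s t := by
  let piece (i : ι) : Set ℝ := {s ∈ Icc a b | σ s = i}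
  have hfar : ∀ᶠ s in 𝓝 t, ∀ i, t ∉ closure (piece i) → s ∉ piece i :=
    eventually_all.2 fun i => by
      by_cases hi : t ∈ closure (piece i)
      · exact .of_forall fun _ h => absurd hi h
      · filter_upwards [isClosed_closure.isOpen_compl.mem_nhds hi] with s hs _
        exact fun h => hs (subset_closure h)
  filter_upwards [self_mem_nhdsWithin, nhdsWithin_le_nhds hfar] with s hs hsfar
  have hcl : t ∈ closure (piece (σ s)) := by_contra fun h => hsfar _ h ⟨hs, rfl⟩
  have hsub : piece (σ s) ⊆ Icc a b := fun _ h => h.1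
  have hcont : ContinuousWithinAt (fun r => dist (f r) (f s)) (piece (σ s)) t :=
    ContinuousWithinAt.mono (Tendsto.dist (hf t ht) tendsto_const_nhds) hsub
  rw [dist_comm (f s), dist_comm s]
  exact hcont.closure_le (g := fun r => L * dist r s) hcl (by fun_prop)
    fun r hr => hσ r hr.1 s hs hr.2

theorem dist_le_of_piecewise_lipschitz (hab : a ≤ b) (hf : ContinuousOn f (Icc a b)) (σ : ℝ → ι)
    (hσ : ∀ s ∈ Icc a b, ∀ t ∈ Icc a b, σ s = σ t → dist (f s) (f t) ≤ L * dist s t) :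
    dist (f a) (f b) ≤ L * (b - a) := by
  refine image_le_of_liminf_slope_right_le_deriv_boundary
    (fun t ht => tendsto_const_nhds.dist (hf t ht)) (by simp) (by fun_prop)
    (fun t _ => ((hasDerivAt_id t).sub_const a).const_mul L |>.hasDerivWithinAt)
    (fun t ht r hr => ?_) ⟨hab, le_rfl⟩
  have hle : ∀ᶠ s in 𝓝[>] t, dist (f s) (f t) ≤ L * dist s t :=
    nhdsWithin_le_of_mem (Icc_mem_nhdsGT_of_mem ht)
      (eventually_dist_le_of_piecewise_lipschitz hf σ hσ (Ico_subset_Icc_self ht))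
  refine (hle.and self_mem_nhdsWithin).frequently.mono fun s ⟨hs, hts⟩ => ?_
  rw [slope_def_field, div_lt_iff₀ (sub_pos.2 hts)]
  rw [Real.dist_eq, abs_of_pos (sub_pos.2 hts)] at hs
  have hsr : L * (s - t) < r * (s - t) := by nlinarith [sub_pos.2 hts]
  linarith [dist_triangle_right (f a) (f s) (f t)]

end Interval

theorem exists_lipschitz_isMinNormPoint {E : Type*} [NormedAddCommGroup E] [InnerProductSpace ℝ E]
    [FiniteDimensional ℝ E] {κ : Type*} [Fintype κ] (T : E →ₗ[ℝ] κ → ℝ) :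
    ∃ C : ℝ≥0, ∀ b₁ b₂ : κ → ℝ, ∀ x₁ x₂ : E, IsMinNormPoint {x | T x ≤ b₁} x₁ →
      IsMinNormPoint {x | T x ≤ b₂} x₂ → ‖x₁ - x₂‖ ≤ C * ‖b₁ - b₂‖ := by
  obtain ⟨C, hC⟩ := exists_norm_sub_le_of_activeSet_eq T
  refine ⟨C, fun b₁ b₂ x₁ x₂ hx₁ hx₂ => ?_⟩
  let β : ℝ →ᵃ[ℝ] κ → ℝ := lineMap b₁ b₂
  have hfeas (t : ℝ) (ht : t ∈ Icc (0 : ℝ) 1) : T (lineMap x₁ x₂ t) ≤ β t := by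
    simpa [lineMap_apply_module] using
      map_combo_le_affine_combo (β := β) (s := 0) (t := 1) (by simpa [β] using hx₁.1)
        (by simpa [β] using hx₂.1) (sub_nonneg.2 ht.2) ht.1 (sub_add_cancel 1 t)
  choose! g hg using fun t ht =>
    (isClosed_polyhedron T (β t)).exists_isMinNormPoint ⟨_, hfeas t ht⟩
  have hg₀ : g 0 = x₁ :=
    (hg 0 (left_mem_Icc.2 zero_le_one)).unique (convex_polyhedron T _) (by simpa [β] using hx₁)
  have hg₁ : g 1 = x₂ :=
    (hg 1 (right_mem_Icc.2 zero_le_one)).unique (convex_polyhedron T _) (by simpa [β] using hx₂)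
  have hpiece : ∀ s ∈ Icc (0 : ℝ) 1, ∀ t ∈ Icc (0 : ℝ) 1,
      activeSet T (β s) (g s) = activeSet T (β t) (g t) →
        dist (g s) (g t) ≤ C * ‖b₁ - b₂‖ * dist s t := fun s hs t ht hst => by
    rw [dist_eq_norm, mul_assoc, mul_comm ‖b₁ - b₂‖, ← dist_eq_norm b₁, ← dist_lineMap_lineMap]
    exact hC (hg s hs) (hg t ht) hst
  simpa [hg₀, hg₁, dist_eq_norm] using dist_le_of_piecewise_lipschitz zero_le_one
    (continuousOn_of_isMinNormPoint_affine hg) (fun t => activeSet T (β t) (g t)) hpiece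

/-- Minimum-norm selection for a strictly convex QP `min ‖x‖² s.t. Ax ≤ b`:
for each `b` with nonempty feasible set the minimizer exists and is unique,
and the minimizer depends Lipschitz-continuously on `b`, with constant
depending only on `A`. -/
theorem stmt_12 {m n : ℕ} (A : Matrix (Fin m) (Fin n) ℝ) :
    (∀ b : EuclideanSpace ℝ (Fin m),
      {x : EuclideanSpace ℝ (Fin n) | A.mulVec x ≤ b}.Nonempty →
      ∃! xstar : EuclideanSpace ℝ (Fin n), A.mulVec xstar ≤ b ∧
        ∀ x : EuclideanSpace ℝ (Fin n), A.mulVec x ≤ b → ‖xstar‖ ^ 2 ≤ ‖x‖ ^ 2) ∧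
    ∃ C > (0 : ℝ), ∀ b₁ b₂ : EuclideanSpace ℝ (Fin m),
      {x : EuclideanSpace ℝ (Fin n) | A.mulVec x ≤ b₁}.Nonempty →
      {x : EuclideanSpace ℝ (Fin n) | A.mulVec x ≤ b₂}.Nonempty →
      ∀ x₁ x₂ : EuclideanSpace ℝ (Fin n),
        (A.mulVec x₁ ≤ b₁ ∧ ∀ x : EuclideanSpace ℝ (Fin n),
            A.mulVec x ≤ b₁ → ‖x₁‖ ^ 2 ≤ ‖x‖ ^ 2) →
        (A.mulVec x₂ ≤ b₂ ∧ ∀ x : EuclideanSpace ℝ (Fin n),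
            A.mulVec x ≤ b₂ → ‖x₂‖ ^ 2 ≤ ‖x‖ ^ 2) →
        ‖x₁ - x₂‖ ≤ C * ‖b₁ - b₂‖ := by
  let T : EuclideanSpace ℝ (Fin n) →ₗ[ℝ] Fin m → ℝ :=
    Matrix.toLin' A ∘ₗ (WithLp.linearEquiv 2 ℝ (Fin n → ℝ)).toLinearMap
  have hmin {b : EuclideanSpace ℝ (Fin m)} {x : EuclideanSpace ℝ (Fin n)} :
      (A.mulVec x ≤ b ∧ ∀ y : EuclideanSpace ℝ (Fin n), A.mulVec y ≤ b → ‖x‖ ^ 2 ≤ ‖y‖ ^ 2) ↔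
        IsMinNormPoint {x | T x ≤ b} x :=
    (isMinNormPoint_iff_sq (K := {x | T x ≤ b})).symm
  refine ⟨fun b hb => ?_, ?_⟩
  · obtain ⟨x, hx⟩ := (isClosed_polyhedron T b).exists_isMinNormPoint hb
    exact ⟨x, hmin.2 hx, fun y hy => (hmin.1 hy).unique (convex_polyhedron T b) hx⟩
  · obtain ⟨C, hC⟩ := exists_lipschitz_isMinNormPoint T
    refine ⟨C + 1, by positivity, fun b₁ b₂ _ _ x₁ x₂ hx₁ hx₂ => ?_⟩
    have hb : ‖WithLp.ofLp b₁ - WithLp.ofLp b₂‖ ≤ ‖b₁ - b₂‖ :=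
      (pi_norm_le_iff_of_nonneg (norm_nonneg _)).2 fun i => PiLp.norm_apply_le (b₁ - b₂) i
    calc ‖x₁ - x₂‖ ≤ C * ‖WithLp.ofLp b₁ - WithLp.ofLp b₂‖ := hC _ _ _ _ (hmin.1 hx₁) (hmin.1 hx₂)
      _ ≤ (C + 1) * ‖b₁ - b₂‖ := by gcongr; linarith
end

section
/- (Lemma 3 of the paper.) Fix a shared server $i$ with job set $\mathcal{J}_i$, service rates $\mu_{ij} > 0$, and limiting arrival rates $\lambda_j > 0$ satisfying the heavy-traffic condition $\sum_{j \in \mathcal{J}_i} \lambda_j/\mu_{ij} = 1$. Let $\{\mathcal{J}_i^>, \mathcal{J}_i^\le\}$ partition $\mathcal{J}_i$, and let $Q_{ij} \ge 0$ and $q^*_{ij} \ge 0$ satisfy $\sum_{j \in \mathcal{J}_i} Q_{ij}/\mu_{ij} = \sum_{j \in \mathcal{J}_i} q^*_{ij}/\mu_{ij}$, with $Q_{ij} > q^*_{ij}$ for $j \in \mathcal{J}_i^>$ and $Q_{ij} \le q^*_{ij}$ for $j \in \mathcal{J}_i^\le$. Then $L \ge 0$ satisfies the fixed-point equation $L = \sum_{j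 \in \mathcal{J}_i} (\lambda_j L - q^*_{ij} + Q_{ij})^+ / \mu_{ij}$ if and only if $L \ge \max_{j \in \mathcal{J}_i^\le} (q^*_{ij} - Q_{ij})/\lambda_j$. -/
open Finset

/-! Heavy traffic and workload balance make `∑ⱼ (λⱼ L - q*ⱼ + Qⱼ) / μⱼ` equal to `L` itself,
so the fixed-point equation says that truncating the summands at `0` changes nothing.
As `y⁺ - y ≥ 0`, with equality iff `y ≥ 0`, this happens iff every summand is nonnegative,
which on `𝒥ᵢ^>` is automatic and on `𝒥ᵢ^≤` is the bound `L ≥ (q*ⱼ - Qⱼ) / λⱼ`. -/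

lemma sum_max_zero_div_eq_sum_div_iff {ι : Type*} {s : Finset ι} {x w : ι → ℝ}
    (hw : ∀ j ∈ s, 0 < w j) :
    ∑ j ∈ s, max (x j) 0 / w j = ∑ j ∈ s, x j / w j ↔ ∀ j ∈ s, 0 ≤ x j := by
  rw [← sub_eq_zero, ← sum_sub_distrib]
  simp_rw [← sub_div]
  rw [sum_eq_zero_iff_of_nonneg fun j hj => div_nonneg (by simp) (hw j hj).le]
  refine forall₂_congr fun j hj => ?_
  rw [div_eq_zero_iff, or_iff_left (hw j hj).ne', sub_eq_zero, max_eq_left_iff]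

lemma sum_affine_div_eq_of_balance {ι : Type*} {J : Finset ι} {μ lam Q qstar : ι → ℝ}
    (hht : ∑ j ∈ J, lam j / μ j = 1)
    (hbal : ∑ j ∈ J, Q j / μ j = ∑ j ∈ J, qstar j / μ j) (L : ℝ) :
    ∑ j ∈ J, (lam j * L - qstar j + Q j) / μ j = L := by
  simp_rw [add_div, sub_div, sum_add_distrib, sum_sub_distrib, mul_comm _ L, mul_div_assoc,
    ← mul_sum, hht, hbal]
  ring

theorem stmt_13_general {ι : Type*} [DecidableEq ι] (J Jg Jl : Finset ι)
    (μ lam Q qstar : ι → ℝ)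
    (hpart : Jg ∪ Jl = J)
    (hμ : ∀ j ∈ J, 0 < μ j) (hlam : ∀ j ∈ J, 0 < lam j)
    (hht : ∑ j ∈ J, lam j / μ j = 1)
    (hbal : ∑ j ∈ J, Q j / μ j = ∑ j ∈ J, qstar j / μ j)
    (hg : ∀ j ∈ Jg, qstar j < Q j)
    (L : ℝ) (hL : 0 ≤ L) :
    (L = ∑ j ∈ J, max (lam j * L - qstar j + Q j) 0 / μ j) ↔
      ∀ j ∈ Jl, (qstar j - Q j) / lam j ≤ L := by
  conv_lhs => lhs; rw [← sum_affine_div_eq_of_balance hht hbal L]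
  rw [eq_comm, sum_max_zero_div_eq_sum_div_iff hμ]
  subst hpart
  have hJg : ∀ j ∈ Jg, 0 ≤ lam j * L - qstar j + Q j := fun j hj => by
    have := mul_nonneg (hlam j (mem_union_left _ hj)).le hL
    linarith [hg j hj]
  rw [forall_mem_union, and_iff_right hJg]
  refine forall₂_congr fun j hj => ?_
  rw [div_le_iff₀ (hlam j (mem_union_right _ hj)), mul_comm]
  constructor <;> intro h <;> linarith

/-- Lemma 3: characterization of solutions of the review-period fixed-point
equation. Under the heavy-traffic condition `∑_{j ∈ 𝒥ᵢ} λ_j/μ_{ij} = 1` and the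
workload-balance condition, `L ≥ 0` satisfies
`L = ∑_{j ∈ 𝒥ᵢ} (λ_j L − q*_{ij} + Q_{ij})⁺/μ_{ij}`
iff `L ≥ (q*_{ij} − Q_{ij})/λ_j` for every `j ∈ 𝒥ᵢ^≤`. -/
theorem stmt_13 {ι : Type*} [DecidableEq ι] (J Jg Jl : Finset ι)
    (μ lam Q qstar : ι → ℝ)
    (hpart : Jg ∪ Jl = J) (hdisj : Disjoint Jg Jl)
    (hμ : ∀ j ∈ J, 0 < μ j) (hlam : ∀ j ∈ J, 0 < lam j)
    (hht : ∑ j ∈ J, lam j / μ j = 1)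
    (hQ : ∀ j ∈ J, 0 ≤ Q j) (hqstar : ∀ j ∈ J, 0 ≤ qstar j)
    (hbal : ∑ j ∈ J, Q j / μ j = ∑ j ∈ J, qstar j / μ j)
    (hg : ∀ j ∈ Jg, qstar j < Q j) (hl : ∀ j ∈ Jl, Q j ≤ qstar j)
    (L : ℝ) (hL : 0 ≤ L) :
    (L = ∑ j ∈ J, max (lam j * L - qstar j + Q j) 0 / μ j) ↔
      ∀ j ∈ Jl, (qstar j - Q j) / lam j ≤ L :=
  stmt_13_general J Jg Jl μ lam Q qstar hpart hμ hlam hht hbal hg L hL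
end
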